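/- For 0 ≤ j ≤ i-4, the number of occurrences of F_{i-j} in F_i equals f_{j+2} - (j mod 2); for j ∈ {i-3, i-2} it equals f_{j+1}; and for j = i-1 it equals f_{j-1}, where by convention f_{-1} = 1 and f_0 = 0. -/

import Mathlib

/-- Fibonacci words over the alphabet {a, b}, encoded with `false` = a, `true` = b:
`F 1 = b`, `F 2 = a`, `F i = F (i-1) ++ F (i-2)` for `i ≥ 3`. -/
def fibw : ℕ → List Bool
  | 0 => []
  | 1 => [true]
  | 2 => [false]
  | n + 3 => fibw (n + 2) ++ fibw (n + 1)

/-- `S` occurs in `T` at (1-based) position `p`. -/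
def occursAt (S T : List Bool) (p : ℕ) : Prop :=
  1 ≤ p ∧ S <+: T.drop (p - 1)

/-- Fibonacci numbers `f j = |F j|` extended to integer indices with the
conventions `f (-1) = 1` and `f 0 = 0`. -/
def fibLen (j : ℤ) : ℕ := if j = -1 then 1 else (fibw j.toNat).length

open List Nat

lemma fib_succ_succ (n : ℕ) : Nat.fib (n+2) = Nat.fib n + Nat.fib (n+1) := Nat.fib_add_two

lemma fibw_len : ∀ n, (fibw n).length = Nat.fib n
  | 0 => rfl
  | 1 => rfl
  | 2 => rfl
  | n + 3 => by
    rw [fibw, List.length_append, fibw_len (n+2), fibw_len (n+1),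
      show n+3 = (n+1)+2 from rfl, fib_succ_succ (n+1), show n+1+1 = n+2 from rfl]
    omega

lemma fibw_ne_nil {n : ℕ} (h : 1 ≤ n) : fibw n ≠ [] := by
  have : (fibw n).length ≠ 0 := by
    rw [fibw_len]
    have := Nat.fib_pos.mpr h
    omega
  exact fun hh => this (by rw [hh]; rfl)

lemma fibw_eq_append {n : ℕ} (h : 3 ≤ n) : fibw n = fibw (n-1) ++ fibw (n-2) := by
  obtain ⟨m, rfl⟩ : ∃ m, n = m + 3 := ⟨n - 3, by omega⟩
  rw [show m+3-1 = m+2 from rfl, show m+3-2 = m+1 from rfl, fibw]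

lemma fibw_prefix : ∀ {a b : ℕ}, 2 ≤ a → a ≤ b → fibw a <+: fibw b := by
  intro a b ha hab
  induction b with
  | zero => omega
  | succ n ih =>
    rcases Nat.lt_or_ge a (n+1) with h | h
    · have h3 : 3 ≤ n + 1 := by omega
      rw [fibw_eq_append h3]
      simp only [Nat.add_sub_cancel]
      exact (ih (by omega)).trans (List.prefix_append _ _)
    · have : a = n + 1 := by omega
      subst this; exact List.prefix_rfl

lemma take_eq_of_prefix {x y : List Bool} (h : x <+: y) {L : ℕ} (hL : L ≤ x.length) :
    y.take L = x.take L := by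
  obtain ⟨t, rfl⟩ := h
  rw [List.take_append, Nat.sub_eq_zero_of_le hL, List.take_zero,
    List.append_nil]

lemma not_prefix_of_length_lt {s t : List Bool} (h : t.length < s.length) : ¬ s <+: t :=
  fun hp => absurd hp.length_le (by omega)

lemma prefix_append_iff_left {s x v : List Bool} (h : s.length ≤ x.length) :
    s <+: x ++ v ↔ s <+: x := by
  constructor
  · intro hp
    have h2 := List.prefix_iff_eq_take.mp hp
    rw [List.take_append, Nat.sub_eq_zero_of_le h, List.take_zero,
      List.append_nil] at h2
    rw [h2]; exact List.take_prefix _ _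
  · exact fun hp => hp.trans (List.prefix_append _ _)

/-- commutation theorem -/
lemma comm_append (u v : List Bool) (h : u ++ v = v ++ u) :
    ∃ (z : List Bool) (i j : ℕ), u = (List.replicate i z).flatten ∧
      v = (List.replicate j z).flatten := by
  suffices H : ∀ n u v, u.length + v.length = n → u ++ v = v ++ u →
      ∃ (z : List Bool) (i j : ℕ), u = (List.replicate i z).flatten ∧
        v = (List.replicate j z).flatten from H _ u v rfl h
  clear h u v
  intro n
  induction n using Nat.strong_induction_on with
  | _ n ih =>
  intro u v hn h
  rcases le_or_gt u.length v.length with hle | hlt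
  · rcases eq_or_ne u [] with rfl | hu
    · exact ⟨v, 0, 1, by simp, by simp⟩
    · have hpre : u <+: v := by
        have h1 : u <+: v ++ u := h ▸ List.prefix_append u v
        have h2 := List.prefix_iff_eq_take.mp h1
        rw [List.take_append, Nat.sub_eq_zero_of_le hle, List.take_zero,
          List.append_nil] at h2
        rw [h2]; exact List.take_prefix _ _
      obtain ⟨w, rfl⟩ := hpre
      have h2 : u ++ w = w ++ u := by
        rw [List.append_assoc] at h
        exact List.append_cancel_left h
      have hlen : u.length + w.length < n := by
        have : u.length ≠ 0 := fun hh => hu (List.eq_nil_of_length_eq_zero hh)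
        rw [List.length_append] at hn
        omega
      obtain ⟨z, i, j, hu', hw'⟩ := ih _ hlen u w rfl h2
      refine ⟨z, i, i + j, hu', ?_⟩
      rw [List.replicate_add, List.flatten_append, ← hu', ← hw']
  · rcases eq_or_ne v [] with rfl | hv
    · exact ⟨u, 1, 0, by simp, by simp⟩
    · have hpre : v <+: u := by
        have h1 : v <+: u ++ v := h.symm ▸ List.prefix_append v u
        have h2 := List.prefix_iff_eq_take.mp h1
        rw [List.take_append, Nat.sub_eq_zero_of_le (by omega), List.take_zero,
          List.append_nil] at h2
        rw [h2]; exact List.take_prefix _ _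
      obtain ⟨w, rfl⟩ := hpre
      have h2 : v ++ w = w ++ v := by
        rw [List.append_assoc] at h
        exact (List.append_cancel_left h.symm)
      have hlen : v.length + w.length < n := by
        have : v.length ≠ 0 := fun hh => hv (List.eq_nil_of_length_eq_zero hh)
        rw [List.length_append] at hn
        omega
      obtain ⟨z, i, j, hv', hw'⟩ := ih _ hlen v w rfl h2
      refine ⟨z, i + j, i, ?_, hv'⟩
      rw [List.replicate_add, List.flatten_append, ← hv', ← hw']

lemma count_flatten_replicate (c : Bool) (z : List Bool) : ∀ n,
    ((List.replicate n z).flatten).count c = n * z.count c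
  | 0 => by simp
  | n + 1 => by
    rw [List.replicate_succ, List.flatten_cons, List.count_append,
      count_flatten_replicate c z n]
    ring

lemma fibw_count_false : ∀ n, 1 ≤ n → (fibw n).count false = Nat.fib (n - 1)
  | 1, _ => rfl
  | 2, _ => rfl
  | n + 3, _ => by
    rw [fibw, List.count_append, fibw_count_false (n+2) (by omega),
      fibw_count_false (n+1) (by omega), show n+3-1 = n+2 from rfl,
      show n+2-1 = n+1 from rfl, show n+1-1 = n from rfl, fib_succ_succ n]
    omega

lemma fibw_count_true : ∀ n, 2 ≤ n → (fibw n).count true = Nat.fib (n - 2)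
  | 2, _ => rfl
  | 3, _ => rfl
  | n + 4, _ => by
    rw [show n + 4 = (n+1) + 3 from rfl, fibw, List.count_append,
      fibw_count_true (n+3) (by omega), fibw_count_true (n+2) (by omega),
      show n+1+3-2 = n+2 from rfl, show n+3-2 = n+1 from rfl,
      show n+2-2 = n from rfl, fib_succ_succ n]
    omega

lemma rot {k q : ℕ} (hk : 2 ≤ k) (h0 : 0 < q) (hq : q < Nat.fib k) :
    (fibw k).rotate q ≠ fibw k := by
  intro h
  set w := fibw k with hw
  have hlen : w.length = Nat.fib k := by rw [hw, fibw_len]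
  have hqlen : q ≤ w.length := by omega
  rw [List.rotate_eq_drop_append_take hqlen] at h
  have hcomm : (w.take q) ++ (w.drop q) = (w.drop q) ++ (w.take q) := by
    rw [List.take_append_drop, h]
  obtain ⟨z, i, j, hu, hv⟩ := comm_append _ _ hcomm
  have h1 : (w.take q).length ≠ 0 := by rw [List.length_take]; omega
  have h2 : (w.drop q).length ≠ 0 := by rw [List.length_drop]; omega
  have hi1 : 1 ≤ i := by
    rcases Nat.eq_zero_or_pos i with rfl | h' ; · rw [hu] at h1; simp at h1
    · exact h'
  have hj1 : 1 ≤ j := by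
    rcases Nat.eq_zero_or_pos j with rfl | h' ; · rw [hv] at h2; simp at h2
    · exact h'
  have hwz : (List.replicate (i+j) z).flatten = w := by
    rw [List.replicate_add, List.flatten_append, ← hu, ← hv, List.take_append_drop]
  have hcf : Nat.fib (k-1) = (i+j) * z.count false := by
    rw [← fibw_count_false k (by omega), ← hw, ← hwz, count_flatten_replicate]
  have hct : Nat.fib (k-2) = (i+j) * z.count true := by
    rw [← fibw_count_true k hk, ← hw, ← hwz, count_flatten_replicate]
  have hcop : Nat.Coprime (Nat.fib (k-2)) (Nat.fib (k-1)) := by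
    have := Nat.fib_coprime_fib_succ (k-2)
    rwa [show k-2+1 = k-1 by omega] at this
  have hdvd : (i+j) ∣ Nat.gcd (Nat.fib (k-2)) (Nat.fib (k-1)) :=
    Nat.dvd_gcd ⟨_, hct⟩ ⟨_, hcf⟩
  rw [Nat.Coprime] at hcop
  rw [hcop] at hdvd
  have := Nat.le_of_dvd one_pos hdvd
  omega

def occ (s t : List Bool) : ℕ :=
  (List.range t.length).countP (fun q => decide (s <+: t.drop q))

def Xc (s u v : List Bool) : ℕ :=
  (List.range (s.length - 1)).countP
    (fun r => decide (s <+: (u.drop (u.length - (s.length - 1) + r)) ++ v))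

lemma occ_zero {s t : List Bool} (h : t.length < s.length) : occ s t = 0 := by
  rw [occ, List.countP_eq_zero]
  intro q hq
  simp only [decide_eq_true_eq]
  exact not_prefix_of_length_lt (by rw [List.length_drop]; omega)

lemma countP_singleton {l : List ℕ} (nd : l.Nodup) {r₀ : ℕ} (h : r₀ ∈ l) {p : ℕ → Bool}
    (hp : ∀ x ∈ l, p x = true ↔ x = r₀) : l.countP p = 1 := by
  have : l.countP p = l.count r₀ := by
    rw [List.count_eq_countP]
    refine List.countP_congr fun x hx => ?_
    rw [hp x hx]
    simp
  rw [this]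
  exact List.count_eq_one_of_mem nd h

lemma occ_self {s : List Bool} (hs : s ≠ []) : occ s s = 1 := by
  have h0 : 0 < s.length := List.length_pos_iff.mpr hs
  refine _root_.countP_singleton List.nodup_range (List.mem_range.mpr h0) fun q hq => ?_
  simp only [decide_eq_true_eq]
  constructor
  · intro hp
    by_contra hne
    have h1 : 0 < q := Nat.pos_of_ne_zero hne
    exact not_prefix_of_length_lt (by rw [List.length_drop]; omega) hp
  · rintro rfl
    simp

lemma occ_append {s u v : List Bool} (hs : s ≠ []) (hu : s.length - 1 ≤ u.length) :
    occ s (u ++ v) = occ s u + Xc s u v + occ s v := by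
  have hm : 0 < s.length := List.length_pos_iff.mpr hs
  set m := s.length with hmdef
  set a := u.length - (m - 1) with hadef
  have hul : u.length = a + (m - 1) := by omega
  -- occ s u = countP over range a
  have hocc_u : occ s u =
      (List.range a).countP (fun q => decide (s <+: u.drop q)) := by
    rw [occ, hul, List.range_add, List.countP_append]
    have : (List.countP (fun q => decide (s <+: u.drop q))
        (List.map (fun x => a + x) (List.range (m-1)))) = 0 := by
      rw [List.countP_map, List.countP_eq_zero]
      intro r hr
      rw [List.mem_range] at hr
      simp only [Function.comp, decide_eq_true_eq]
      exact not_prefix_of_length_lt (by rw [List.length_drop]; omega)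
    omega
  rw [occ, List.length_append, hul, List.range_add, List.countP_append,
    List.range_add, List.countP_append, List.countP_map, List.countP_map]
  have hchunk1 : (List.countP (fun q => decide (s <+: (u ++ v).drop q)) (List.range a)) =
      occ s u := by
    rw [hocc_u]
    refine List.countP_congr fun q hq => ?_
    rw [List.mem_range] at hq
    simp only [decide_eq_true_eq]
    rw [List.drop_append, Nat.sub_eq_zero_of_le (by omega), List.drop_zero]
    exact prefix_append_iff_left (by rw [List.length_drop]; omega)
  have hchunk2 : List.countP ((fun q => decide (s <+: (u ++ v).drop q)) ∘ (fun x => a + x))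
      (List.range (m - 1)) = Xc s u v := by
    rw [Xc]
    refine List.countP_congr fun r hr => ?_
    rw [List.mem_range] at hr
    simp only [Function.comp, decide_eq_true_eq]
    rw [List.drop_append, Nat.sub_eq_zero_of_le (by omega), List.drop_zero]
  have hchunk3 : List.countP ((fun q => decide (s <+: (u ++ v).drop q)) ∘
      (fun x => a + (m - 1) + x)) (List.range v.length) = occ s v := by
    rw [occ]
    refine List.countP_congr fun r hr => ?_
    rw [List.mem_range] at hr
    simp only [Function.comp, decide_eq_true_eq]
    rw [List.drop_append,
      show a + (m-1) + r - u.length = r by omega,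
      List.drop_eq_nil_of_le (by omega), List.nil_append]
  rw [hchunk1, hchunk2, hchunk3]

lemma prefix_cross_iff {s y v v' : List Bool} {m : ℕ} (hm : m = s.length)
    (hy : y.length < m) (hvv : v.take (m - y.length) = v'.take (m - y.length)) :
    (s <+: y ++ v ↔ s <+: y ++ v') := by
  rw [List.prefix_iff_eq_take, List.prefix_iff_eq_take, ← hm,
    List.take_append, List.take_append,
    List.take_of_length_le (by omega), hvv]

lemma Xc_congr {s u u' v v' : List Bool} (hs : s ≠ [])
    (hu : s.length - 1 ≤ u.length) (hu' : s.length - 1 ≤ u'.length)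
    (hsuf : u.drop (u.length - (s.length - 1)) = u'.drop (u'.length - (s.length - 1)))
    (hpre : v.take (s.length - 1) = v'.take (s.length - 1)) :
    Xc s u v = Xc s u' v' := by
  have hm : 0 < s.length := List.length_pos_iff.mpr hs
  set m := s.length with hmdef
  rw [Xc, Xc]
  refine List.countP_congr fun r hr => ?_
  rw [List.mem_range] at hr
  simp only [decide_eq_true_eq]
  have hd : u.drop (u.length - (m - 1) + r) = (u.drop (u.length - (m-1))).drop r := by
    rw [List.drop_drop, Nat.add_comm]
  have hd' : u'.drop (u'.length - (m - 1) + r) = (u'.drop (u'.length - (m-1))).drop r := by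
    rw [List.drop_drop, Nat.add_comm]
  rw [hd, hd', ← hsuf]
  set y := (u.drop (u.length - (m-1))).drop r with hy
  have hylen : y.length < m := by
    rw [hy, List.length_drop, List.length_drop]
    omega
  have hylen2 : y.length = m - 1 - r := by
    rw [hy, List.length_drop, List.length_drop]; omega
  have hvv : v.take (m - y.length) = v'.take (m - y.length) := by
    have h3 : m - y.length ≤ m - 1 := by omega
    have e1 : (v.take (m-1)).take (m - y.length) = v.take (m - y.length) := by
      rw [List.take_take, Nat.min_eq_left h3]
    have e2 : (v'.take (m-1)).take (m - y.length) = v'.take (m - y.length) := by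
      rw [List.take_take, Nat.min_eq_left h3]
    rw [← e1, ← e2, hpre]
  exact prefix_cross_iff hmdef hylen hvv

lemma rot_of_prefix {k' : ℕ} (hk' : 2 ≤ k') {r' : ℕ} (h1 : 1 ≤ r') (h2 : r' < Nat.fib k')
    {rest : List Bool} (hw : fibw k' <+: (fibw k').drop r' ++ rest)
    (hrest : rest.take r' = (fibw k').take r') : False := by
  have hlen : (fibw k').length = Nat.fib k' := fibw_len k'
  have heq := List.prefix_iff_eq_take.mp hw
  rw [List.take_append,
    List.take_of_length_le (by rw [List.length_drop]; omega),
    List.length_drop, hlen,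
    show Nat.fib k' - (Nat.fib k' - r') = r' by omega, hrest] at heq
  exact rot hk' h1 h2 (by
    rw [List.rotate_eq_drop_append_take (by omega : r' ≤ (fibw k').length)]
    exact heq.symm)

lemma XB {k : ℕ} (hk : 2 ≤ k) : Xc (fibw k) (fibw k) (fibw k) = 0 := by
  have hlen : (fibw k).length = Nat.fib k := fibw_len k
  have hfp : 0 < Nat.fib k := Nat.fib_pos.mpr (by omega)
  rw [Xc, List.countP_eq_zero]
  intro r hr
  rw [List.mem_range] at hr
  simp only [decide_eq_true_eq]
  intro hp
  rw [show (fibw k).length - ((fibw k).length - 1) + r = 1 + r by omega] at hp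
  exact rot_of_prefix hk (by omega) (by omega) hp rfl

lemma XA {k : ℕ} (hk : 3 ≤ k) : Xc (fibw k) (fibw k) (fibw (k-1)) = 0 := by
  have hlen : (fibw k).length = Nat.fib k := fibw_len k
  have hlen1 : (fibw (k-1)).length = Nat.fib (k-1) := fibw_len (k-1)
  have hfp : 0 < Nat.fib k := Nat.fib_pos.mpr (by omega)
  rw [Xc, List.countP_eq_zero]
  intro r hr
  rw [List.mem_range] at hr
  simp only [decide_eq_true_eq]
  intro hp
  rw [show (fibw k).length - ((fibw k).length - 1) + r = 1 + r by omega] at hp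
  set q := 1 + r with hq
  have hqf : q ≤ Nat.fib (k-1) := by
    have := hp.length_le
    rw [List.length_append, List.length_drop, hlen, hlen1] at this
    omega
  have hpre : fibw (k-1) <+: fibw k := fibw_prefix (by omega) (by omega)
  exact rot_of_prefix (by omega) (by omega) (by omega) hp
    ((take_eq_of_prefix hpre (by omega)).symm)

lemma XC {k : ℕ} (hk : 4 ≤ k) : Xc (fibw k) (fibw (k+1)) (fibw k) = 1 := by
  have hlen : (fibw k).length = Nat.fib k := fibw_len k
  have hlen1 : (fibw (k+1)).length = Nat.fib (k+1) := fibw_len (k+1)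
  have hlen2 : (fibw (k-1)).length = Nat.fib (k-1) := fibw_len (k-1)
  have hlen3 : (fibw (k-2)).length = Nat.fib (k-2) := fibw_len (k-2)
  have hfib1 : Nat.fib (k+1) = Nat.fib (k-1) + Nat.fib k := by
    have := fib_succ_succ (k-1)
    rw [show k-1+2 = k+1 by omega, show k-1+1 = k by omega] at this
    omega
  have hfibk : Nat.fib k = Nat.fib (k-2) + Nat.fib (k-1) := by
    have := fib_succ_succ (k-2)
    rw [show k-2+2 = k by omega, show k-2+1 = k-1 by omega] at this
    omega
  have hf2 : 0 < Nat.fib (k-2) := Nat.fib_pos.mpr (by omega)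
  have hf1 : 0 < Nat.fib (k-1) := Nat.fib_pos.mpr (by omega)
  have hmono : Nat.fib (k-2) ≤ Nat.fib (k-1) := Nat.fib_mono (by omega)
  have hsplit : fibw (k+1) = fibw k ++ fibw (k-1) := by
    rw [fibw_eq_append (show 3 ≤ k+1 by omega), Nat.add_sub_cancel,
      show k+1-2 = k-1 by omega]
  have hsplitk : fibw k = fibw (k-1) ++ fibw (k-2) := fibw_eq_append (by omega)
  rw [Xc]
  refine _root_.countP_singleton List.nodup_range (r₀ := Nat.fib (k-2) - 1)
    (List.mem_range.mpr (by omega)) (fun r hr => ?_)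
  rw [List.mem_range] at hr
  simp only [decide_eq_true_eq]
  have hqform : (fibw (k+1)).length - ((fibw k).length - 1) + r = Nat.fib (k-1) + 1 + r := by
    omega
  rw [hqform]
  set q := Nat.fib (k-1) + 1 + r with hqdef
  have hrub : r < Nat.fib k - 1 := by
    rw [hlen] at hr; exact hr
  constructor
  · -- uniqueness
    intro hp
    by_contra hne
    have hqne : q ≠ Nat.fib k := by omega
    rcases Nat.lt_or_ge q (Nat.fib k) with hlt | hge
    · -- case (a) : fib (k-1) < q < fib k
      set r' := q - Nat.fib (k-1) with hr'
      have h1r : 1 ≤ r' := by omega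
      have h2r : r' < Nat.fib (k-2) := by omega
      have hdrop : (fibw (k+1)).drop q = (fibw (k-2)).drop r' ++ fibw (k-1) := by
        rw [hsplit, List.drop_append,
          show q - (fibw k).length = 0 by omega, List.drop_zero, hsplitk,
          List.drop_append]
        have hnil : (fibw (k-1)).drop q = [] := List.drop_eq_nil_of_le (by omega)
        rw [hnil, List.nil_append, show q - (fibw (k-1)).length = r' by omega]
      rw [hdrop, List.append_assoc] at hp
      have hp' : fibw (k-2) <+: (fibw (k-2)).drop r' ++ (fibw (k-1) ++ fibw k) :=
        (fibw_prefix (by omega) (by omega : k-2 ≤ k)).trans hp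
      refine rot_of_prefix (show 2 ≤ k-2 by omega) h1r h2r hp' ?_
      have htk : (fibw (k-1) ++ fibw k).take r' = (fibw (k-1)).take r' := by
        rw [List.take_append, show r' - (fibw (k-1)).length = 0 by omega,
          List.take_zero, List.append_nil]
      rw [htk]
      exact take_eq_of_prefix (fibw_prefix (show 2 ≤ k-2 by omega) (show k-2 ≤ k-1 by omega))
        (show r' ≤ (fibw (k-2)).length by omega)
    · -- case (b) : fib k < q
      set r' := q - Nat.fib k with hr'
      have h1r : 1 ≤ r' := by omega
      have h2r : r' < Nat.fib (k-1) := by omega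
      have hdrop : (fibw (k+1)).drop q = (fibw (k-1)).drop r' := by
        rw [hsplit, List.drop_append]
        have hnil : (fibw k).drop q = [] := List.drop_eq_nil_of_le (by omega)
        rw [hnil, List.nil_append, show q - (fibw k).length = r' by omega]
      rw [hdrop] at hp
      have hp' : fibw (k-1) <+: (fibw (k-1)).drop r' ++ fibw k :=
        (fibw_prefix (by omega) (by omega : k-1 ≤ k)).trans hp
      refine rot_of_prefix (show 2 ≤ k-1 by omega) h1r h2r hp' ?_
      exact take_eq_of_prefix (fibw_prefix (show 2 ≤ k-1 by omega) (show k-1 ≤ k by omega))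
        (show r' ≤ (fibw (k-1)).length by omega)
  · -- existence
    rintro rfl
    have hq : q = Nat.fib k := by omega
    rw [hq]
    have hdrop : (fibw (k+1)).drop (Nat.fib k) = fibw (k-1) := by
      rw [hsplit, ← hlen, List.drop_left]
    rw [hdrop]
    obtain ⟨t, ht⟩ := fibw_prefix (show 2 ≤ k-2 by omega) (show k-2 ≤ k by omega)
    refine ⟨t, ?_⟩
    calc fibw k ++ t = fibw (k-1) ++ (fibw (k-2) ++ t) := by rw [hsplitk, List.append_assoc]
    _ = fibw (k-1) ++ fibw k := by rw [ht]

lemma K2 {k : ℕ} (hk : 3 ≤ k) : occ (fibw k) (fibw (k+1)) = 1 := by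
  have hlen : (fibw k).length = Nat.fib k := fibw_len k
  have hlen1 : (fibw (k-1)).length = Nat.fib (k-1) := fibw_len (k-1)
  have hfibk : Nat.fib k = Nat.fib (k-2) + Nat.fib (k-1) := by
    have := fib_succ_succ (k-2)
    rw [show k-2+2 = k by omega, show k-2+1 = k-1 by omega] at this
    omega
  have hf2 : 0 < Nat.fib (k-2) := Nat.fib_pos.mpr (by omega)
  have hsplit : fibw (k+1) = fibw k ++ fibw (k-1) := by
    rw [fibw_eq_append (show 3 ≤ k+1 by omega), Nat.add_sub_cancel,
      show k+1-2 = k-1 by omega]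
  rw [hsplit, occ_append (fibw_ne_nil (by omega)) (by omega),
    occ_self (fibw_ne_nil (by omega)), XA hk, occ_zero (by omega)]

lemma suffix_step {m L : ℕ} (hm : 1 ≤ m) (hL : L ≤ Nat.fib m) :
    (fibw (m+2)).drop (Nat.fib (m+2) - L) = (fibw m).drop (Nat.fib m - L) := by
  have hlen1 : (fibw (m+1)).length = Nat.fib (m+1) := fibw_len (m+1)
  have hfib : Nat.fib (m+2) = Nat.fib m + Nat.fib (m+1) := fib_succ_succ m
  have hsplit : fibw (m+2) = fibw (m+1) ++ fibw m := by
    rw [fibw_eq_append (show 3 ≤ m+2 by omega), show m+2-1 = m+1 by omega,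
      show m+2-2 = m by omega]
  rw [hsplit, List.drop_append]
  have hnil : (fibw (m+1)).drop (Nat.fib (m+2) - L) = [] :=
    List.drop_eq_nil_of_le (by omega)
  rw [hnil, List.nil_append, show Nat.fib (m+2) - L - (fibw (m+1)).length
    = Nat.fib m - L by omega]

lemma suffix_iter {m L : ℕ} (hm : 1 ≤ m) (hL : L ≤ Nat.fib m) : ∀ d,
    (fibw (m+2*d)).drop (Nat.fib (m+2*d) - L) = (fibw m).drop (Nat.fib m - L)
  | 0 => rfl
  | d+1 => by
    have h1 : m + 2*(d+1) = (m + 2*d) + 2 := by omega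
    have h2 : L ≤ Nat.fib (m + 2*d) := le_trans hL (Nat.fib_mono (by omega))
    rw [h1, suffix_step (by omega) h2, suffix_iter hm hL d]

lemma main4 {k : ℕ} (hk : 4 ≤ k) : ∀ n, k ≤ n →
    occ (fibw k) (fibw n) = Nat.fib (n - k + 2) - (n - k) % 2 := by
  intro n
  induction n using Nat.strong_induction_on with
  | _ n ih =>
  intro hn
  have hlenk : (fibw k).length = Nat.fib k := fibw_len k
  have hfk : 0 < Nat.fib k := Nat.fib_pos.mpr (by omega)
  rcases Nat.lt_or_ge n (k+2) with hsm | hbig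
  · rcases Nat.lt_or_ge n (k+1) with h1 | h1
    · -- n = k
      have : n = k := by omega
      subst this
      rw [occ_self (fibw_ne_nil (by omega)), Nat.sub_self]
      rw [show (0:ℕ)+2 = 2 from rfl, Nat.fib_two]
    · -- n = k+1
      have : n = k + 1 := by omega
      subst this
      rw [K2 (by omega), Nat.add_sub_cancel_left]
      have h3 : Nat.fib (1+2) = 2 := by
        rw [fib_succ_succ 1, show (1:ℕ)+1 = 2 from rfl, Nat.fib_one, Nat.fib_two]
      omega
  · -- n ≥ k + 2
    obtain ⟨j2, rfl⟩ : ∃ j2, n = k + 2 + j2 := ⟨n - (k+2), by omega⟩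
    have hsplit : fibw (k+2+j2) = fibw (k+1+j2) ++ fibw (k+j2) := by
      rw [fibw_eq_append (show 3 ≤ k+2+j2 by omega),
        show k+2+j2-1 = k+1+j2 by omega, show k+2+j2-2 = k+j2 by omega]
    have hmono1 : Nat.fib k ≤ Nat.fib (k+1+j2) := Nat.fib_mono (by omega)
    rw [hsplit, occ_append (fibw_ne_nil (by omega)) (by simp only [fibw_len]; omega)]
    have ih1 : occ (fibw k) (fibw (k+1+j2)) = Nat.fib (j2+3) - (j2+1) % 2 := by
      have := ih (k+1+j2) (by omega) (by omega)
      rwa [show k+1+j2-k = j2+1 by omega, show j2+1+2 = j2+3 by omega] at this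
    have ih2 : occ (fibw k) (fibw (k+j2)) = Nat.fib (j2+2) - j2 % 2 := by
      have := ih (k+j2) (by omega) (by omega)
      rwa [show k+j2-k = j2 by omega, show j2+2 = j2+2 by omega] at this
    have hpre : (fibw (k+j2)).take ((fibw k).length - 1)
        = (fibw k).take ((fibw k).length - 1) :=
      take_eq_of_prefix (fibw_prefix (by omega) (by omega)) (by omega)
    have hXval : Xc (fibw k) (fibw (k+1+j2)) (fibw (k+j2)) = (j2+1) % 2 := by
      rcases Nat.even_or_odd j2 with he | ho
      · -- j2 even : j2+1 odd : e = 1, use XC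
        obtain ⟨d, hd⟩ : ∃ d, j2 = 2*d := by
          obtain ⟨d, hd⟩ := he; exact ⟨d, by omega⟩
        have hsuf : (fibw (k+1+j2)).drop ((fibw (k+1+j2)).length - ((fibw k).length - 1))
            = (fibw (k+1)).drop ((fibw (k+1)).length - ((fibw k).length - 1)) := by
          simp only [fibw_len]
          rw [show k+1+j2 = (k+1)+2*d by omega]
          exact suffix_iter (by omega)
            (le_trans (by omega) (Nat.fib_mono (show k ≤ k+1 by omega))) d
        have := Xc_congr (fibw_ne_nil (show 1 ≤ k by omega))
          (by simp only [fibw_len]; omega)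
          (by simp only [fibw_len]
              have := Nat.fib_mono (show k ≤ k+1 by omega); omega)
          hsuf hpre
        rw [this, XC hk]
        omega
      · -- j2 odd : e = 0, use XB
        obtain ⟨d, hd⟩ : ∃ d, j2 + 1 = 2*d := by
          obtain ⟨d, hd⟩ := ho; exact ⟨d+1, by omega⟩
        have hsuf : (fibw (k+1+j2)).drop ((fibw (k+1+j2)).length - ((fibw k).length - 1))
            = (fibw k).drop ((fibw k).length - ((fibw k).length - 1)) := by
          simp only [fibw_len]
          rw [show k+1+j2 = k+2*d by omega]
          exact suffix_iter (by omega) (by omega : Nat.fib k - 1 ≤ Nat.fib k) d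
        have := Xc_congr (fibw_ne_nil (show 1 ≤ k by omega))
          (by simp only [fibw_len]; omega)
          (by omega : (fibw k).length - 1 ≤ (fibw k).length)
          hsuf hpre
        rw [this, XB (by omega)]
        omega
    rw [ih1, ih2, hXval, show k+2+j2-k = j2+2 by omega]
    have hf1 : Nat.fib (j2+4) = Nat.fib (j2+2) + Nat.fib (j2+3) := fib_succ_succ (j2+2)
    have hf2 : Nat.fib (j2+3) = Nat.fib (j2+1) + Nat.fib (j2+2) := fib_succ_succ (j2+1)
    have hf3 : 0 < Nat.fib (j2+1) := Nat.fib_pos.mpr (by omega)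
    have hf4 : 0 < Nat.fib (j2+2) := Nat.fib_pos.mpr (by omega)
    rw [show j2+2+2 = j2+4 by omega]
    omega

lemma Xc_single {c : Bool} (u v : List Bool) : Xc [c] u v = 0 := rfl

lemma occ_a : ∀ n, 1 ≤ n → occ [false] (fibw n) = Nat.fib (n - 1) := by
  intro n
  induction n using Nat.strong_induction_on with
  | _ n ih =>
  intro hn
  match n, hn with
  | 1, _ => decide
  | 2, _ => decide
  | (m+3), _ =>
    rw [fibw, occ_append (by simp) (by simp),
      ih (m+2) (by omega) (by omega), ih (m+1) (by omega) (by omega), Xc_single,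
      show m+3-1 = m+2 from rfl, show m+2-1 = m+1 from rfl, show m+1-1 = m from rfl]
    have := fib_succ_succ m
    omega

lemma occ_b : ∀ n, 2 ≤ n → occ [true] (fibw n) = Nat.fib (n - 2) := by
  intro n
  induction n using Nat.strong_induction_on with
  | _ n ih =>
  intro hn
  match n, hn with
  | 2, _ => decide
  | 3, _ => decide
  | (m+4), _ =>
    rw [show m+4 = (m+1)+3 from rfl, fibw, occ_append (by simp) (by simp),
      ih (m+3) (by omega) (by omega), ih (m+2) (by omega) (by omega), Xc_single,
      show m+1+3-2 = m+2 from rfl, show m+3-2 = m+1 from rfl, show m+2-2 = m from rfl]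
    have := fib_succ_succ m
    omega

lemma fibw3 : fibw 3 = [false, true] := rfl

lemma occ_ab : ∀ n, 3 ≤ n → occ (fibw 3) (fibw n) = Nat.fib (n - 2) := by
  intro n
  induction n using Nat.strong_induction_on with
  | _ n ih =>
  intro hn
  match n, hn with
  | 3, _ => decide
  | 4, _ => decide
  | (m+5), _ =>
    have hlen3 : (fibw 3).length = 2 := rfl
    have h4 : 1 ≤ Nat.fib (m+4) := Nat.fib_pos.mpr (by omega)
    have hlen4 : (fibw (m+4)).length = Nat.fib (m+4) := fibw_len (m+4)
    have hX : Xc (fibw 3) (fibw (m+4)) (fibw (m+3)) = 0 := by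
      rw [Xc, hlen3, List.countP_eq_zero]
      intro r hr
      rw [List.mem_range] at hr
      have hr0 : r = 0 := by omega
      subst hr0
      simp only [decide_eq_true_eq]
      intro hp
      set y := (fibw (m+4)).drop ((fibw (m+4)).length - (2 - 1) + 0) with hy
      have hylen : y.length = 1 := by
        rw [hy, List.length_drop, hlen4]; omega
      obtain ⟨cc, hcc⟩ := List.length_eq_one_iff.mp hylen
      rw [hcc, fibw3] at hp
      have hp2 : [true] <+: fibw (m+3) := by
        rw [List.cons_append, List.nil_append] at hp
        exact (List.cons_prefix_cons.mp hp).2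
      have h1 := List.prefix_iff_eq_take.mp hp2
      have hpre2 : (fibw (m+3)).take 1 = [false] := by
        have h2 : fibw 2 <+: fibw (m+3) := fibw_prefix (by omega) (by omega)
        rw [take_eq_of_prefix h2 (L := 1) (by decide)]; rfl
      rw [show ([true] : List Bool).length = 1 from rfl, hpre2] at h1
      simp at h1
    have hsplit5 : fibw (m+5) = fibw (m+4) ++ fibw (m+3) := by
      rw [fibw_eq_append (show 3 ≤ m+5 by omega), show m+5-1 = m+4 from rfl,
        show m+5-2 = m+3 from rfl]
    rw [hsplit5, occ_append (by rw [fibw3]; simp) (by rw [hlen3, hlen4]; omega),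
      ih (m+4) (by omega) (by omega), ih (m+3) (by omega) (by omega), hX,
      show m+4-2 = m+2 from rfl, show m+3-2 = m+1 from rfl, show m+5-2 = m+3 from rfl]
    have := fib_succ_succ (m+1)
    rw [show m+1+2 = m+3 from rfl, show m+1+1 = m+2 from rfl] at this
    omega

lemma card_filter_range (n : ℕ) (p : ℕ → Prop) [DecidablePred p] :
    ((Finset.range n).filter p).card = (List.range n).countP (fun q => decide (p q)) := by
  induction n with
  | zero => rfl
  | succ n ih =>
    rw [Finset.range_add_one, List.range_succ, List.countP_append, Finset.filter_insert]
    by_cases hp : p n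
    · rw [if_pos hp, Finset.card_insert_of_notMem (fun hmem => by
        have h5 := Finset.mem_of_mem_filter n hmem
        exact absurd h5 Finset.notMem_range_self), ih]
      simp [hp]
    · rw [if_neg hp, ih]
      simp [hp]

lemma ncard_occ (s t : List Bool) (hs : s ≠ []) :
    {p | occursAt s t p}.ncard = occ s t := by
  classical
  have hset : {p | occursAt s t p} =
      ↑(((Finset.range t.length).filter (fun q => s <+: t.drop q)).image (· + 1)) := by
    ext p
    simp only [Set.mem_setOf_eq, Finset.coe_image, Set.mem_image, Finset.mem_coe,
      Finset.mem_filter, Finset.mem_range]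
    constructor
    · rintro ⟨hp1, hp2⟩
      refine ⟨p - 1, ⟨?_, hp2⟩, by omega⟩
      by_contra hge
      have hlen : (t.drop (p-1)).length = 0 := by rw [List.length_drop]; omega
      have hsl := hp2.length_le
      rw [hlen] at hsl
      exact hs (List.eq_nil_of_length_eq_zero (by omega))
    · rintro ⟨q, ⟨hq1, hq2⟩, rfl⟩
      exact ⟨by omega, by simpa using hq2⟩
  rw [hset, Set.ncard_coe_finset,
    Finset.card_image_of_injective _ (fun a b hab => by omega), occ,
    card_filter_range]

theorem fib_occ_count (i j : ℕ) (hi : 1 ≤ i) (hj : j ≤ i - 1) :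
    ((j : ℤ) ≤ (i : ℤ) - 4 →
      {p | occursAt (fibw (i - j)) (fibw i) p}.ncard = fibLen (j + 2) - j % 2) ∧
    ((j : ℤ) = (i : ℤ) - 3 ∨ (j : ℤ) = (i : ℤ) - 2 →
      {p | occursAt (fibw (i - j)) (fibw i) p}.ncard = fibLen (j + 1)) ∧
    ((j : ℤ) = (i : ℤ) - 1 →
      {p | occursAt (fibw (i - j)) (fibw i) p}.ncard = fibLen ((j : ℤ) - 1)) := by
  refine ⟨?_, ?_, ?_⟩
  · -- j ≤ i - 4
    intro h
    have h4 : j + 4 ≤ i := by omega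
    rw [ncard_occ _ _ (fibw_ne_nil (by omega))]
    have hm := main4 (k := i - j) (by omega) i (by omega)
    rw [show i - (i - j) = j by omega] at hm
    rw [hm]
    have hfl : fibLen ((j : ℤ) + 2) = Nat.fib (j + 2) := by
      rw [fibLen, if_neg (by omega), fibw_len]
      exact congrArg Nat.fib (by omega)
    rw [hfl]
  · -- j = i - 3 or i - 2
    rintro (h | h)
    · have h3 : j + 3 = i := by omega
      have hij : i - j = 3 := by omega
      rw [hij, ncard_occ _ _ (fibw_ne_nil (by rw [show (3:ℕ) = 1+2 from rfl]; omega)),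
        occ_ab i (by omega)]
      have hfl : fibLen ((j : ℤ) + 1) = Nat.fib (j + 1) := by
        rw [fibLen, if_neg (by omega), fibw_len]
        exact congrArg Nat.fib (by omega)
      rw [hfl, show i - 2 = j + 1 by omega]
    · have h2 : j + 2 = i := by omega
      have hij : i - j = 2 := by omega
      rw [hij, show fibw 2 = [false] from rfl,
        ncard_occ _ _ (by simp), occ_a i (by omega)]
      have hfl : fibLen ((j : ℤ) + 1) = Nat.fib (j + 1) := by
        rw [fibLen, if_neg (by omega), fibw_len]
        exact congrArg Nat.fib (by omega)
      rw [hfl, show i - 1 = j + 1 by omega]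
  · -- j = i - 1
    intro h
    have h1 : j + 1 = i := by omega
    have hij : i - j = 1 := by omega
    rcases Nat.lt_or_ge i 2 with hsm | hbig
    · -- i = 1, j = 0
      have hi1 : i = 1 := by omega
      have hj0 : j = 0 := by omega
      subst hi1; subst hj0
      rw [show (1:ℕ) - 0 = 1 from rfl, ncard_occ _ _ (by simp [fibw]),
        show ((0:ℕ) : ℤ) - 1 = -1 by omega, fibLen, if_pos rfl]
      decide
    · rw [hij, show fibw 1 = [true] from rfl, ncard_occ _ _ (by simp),
        occ_b i (by omega)]
      have hfl : fibLen ((j : ℤ) - 1) = Nat.fib (j - 1) := by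
        rw [fibLen, if_neg (by omega), fibw_len]
        exact congrArg Nat.fib (by omega)
      rw [hfl, show i - 2 = j - 1 by omega]
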